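/- Let G be a connected graph and let (T, 𝒳) be a tree-cut decomposition of G of finite adhesion whose parts are precisely the ω-edge blocks of G and such that for every edge t₁t₂ of T there is an edge of G between X_{t₁} and X_{t₂}. If R is a ray in G that is edge-dominated by no vertex of G, then there exists a ray t₁t₂t₃… in T such that for every n, some tail of R is contained in ⋃_{t ∈ Tₙ} X_t, where Tₙ denotes the component of T − tₙtₙ₊₁ containing tₙ₊₁. -/

import Mathlib

/-- The set of edges of `G` with one endpoint in `A` and the other in `B`. -/
def edgesBetween {V : Type*} (G : SimpleGraph V) (A B : Set V) : Set (Sym2 V) :=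
  {e | e ∈ G.edgeSet ∧ ∃ x ∈ A, ∃ y ∈ B, e = s(x, y)}

/-- `x ~ y` iff no finite set of edges of `G` separates `x` from `y`. -/
def OmegaEquiv {V : Type*} (G : SimpleGraph V) (x y : V) : Prop :=
  ∀ F : Set (Sym2 V), F.Finite → (G.deleteEdges F).Reachable x y

/-- The ω-edge blocks of `G` are the equivalence classes of `OmegaEquiv`. -/
def IsOmegaEdgeBlock {V : Type*} (G : SimpleGraph V) (B : Set V) : Prop :=
  ∃ x, B = {y | OmegaEquiv G x y}

/-- Given a tree-cut decomposition `(T, X)` and an edge `t₁t₂` of `T`, the union of the parts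
indexed by the component of `T - t₁t₂` containing `t₁`. -/
def side {τ V : Type*} (T : SimpleGraph τ) (X : τ → Set V) (t₁ t₂ : τ) : Set V :=
  ⋃ t ∈ {u | (T.deleteEdges {s(t₁, t₂)}).Reachable t₁ u}, X t

/-- A region of `G` is (the vertex set of) a connected subgraph with finite edge boundary. -/
def IsRegion {V : Type*} (G : SimpleGraph V) (C : Set V) : Prop :=
  (G.induce C).Connected ∧ (edgesBetween G C Cᶜ).Finite

/-- A ray in `G` is an injective one-way infinite path. -/
def IsRay {V : Type*} (G : SimpleGraph V) (f : ℕ → V) : Prop :=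
  Function.Injective f ∧ ∀ n, G.Adj (f n) (f (n + 1))

/-- A vertex `v` edge-dominates a ray `R` if for every finite edge set `F`, `v` lies in the
same component of `G - F` as some tail of `R`. -/
def EdgeDominates {V : Type*} (G : SimpleGraph V) (v : V) (R : ℕ → V) : Prop :=
  ∀ F : Set (Sym2 V), F.Finite → ∃ m, ∀ n ≥ m, (G.deleteEdges F).Reachable v (R n)

section Aux

open SimpleGraph

variable {V τ : Type*} {G : SimpleGraph V} {T : SimpleGraph τ} {X : τ → Set V}

lemma omegaEquiv_refl (x : V) : OmegaEquiv G x x := fun _ _ => Reachable.refl x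

lemma omegaEquiv_symm {x y : V} (h : OmegaEquiv G x y) : OmegaEquiv G y x :=
  fun F hF => (h F hF).symm

lemma omegaEquiv_trans {x y z : V} (h1 : OmegaEquiv G x y) (h2 : OmegaEquiv G y z) :
    OmegaEquiv G x z := fun F hF => (h1 F hF).trans (h2 F hF)

lemma block_eq_class (hblocks : ∀ t, IsOmegaEdgeBlock G (X t)) {v : V} {t : τ} (hv : v ∈ X t) :
    X t = {y | OmegaEquiv G v y} := by
  obtain ⟨x, hx⟩ := hblocks t
  rw [hx] at hv ⊢
  ext y
  exact ⟨fun hy => omegaEquiv_trans (omegaEquiv_symm hv) hy, fun hy => omegaEquiv_trans hv hy⟩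

lemma same_block_omega (hblocks : ∀ t, IsOmegaEdgeBlock G (X t)) {v w : V} {t : τ}
    (hv : v ∈ X t) (hw : w ∈ X t) : OmegaEquiv G v w := by
  rw [block_eq_class hblocks hv] at hw; exact hw

lemma block_unique (hblocks : ∀ t, IsOmegaEdgeBlock G (X t)) (hinj : Function.Injective X)
    {v : V} {t t' : τ} (hv : v ∈ X t) (hv' : v ∈ X t') : t = t' := by
  apply hinj
  rw [block_eq_class hblocks hv, block_eq_class hblocks hv']

lemma exists_block (hsurj : ∀ B : Set V, IsOmegaEdgeBlock G B → ∃ t, X t = B) (v : V) :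
    ∃ t, v ∈ X t := by
  obtain ⟨t, ht⟩ := hsurj {y | OmegaEquiv G v y} ⟨v, rfl⟩
  exact ⟨t, by rw [ht]; exact omegaEquiv_refl v⟩

lemma tree_not_reach (hT : T.IsTree) {a b : τ} (hab : T.Adj a b) :
    ¬ (T.deleteEdges {s(a, b)}).Reachable a b := by
  have hb := (SimpleGraph.isAcyclic_iff_forall_adj_isBridge.mp hT.IsAcyclic) hab
  exact SimpleGraph.isBridge_iff.mp hb

lemma reach_or_of_walk (hT : T.IsTree) {a b : τ} (hab : T.Adj a b) :
    ∀ {x u : τ}, T.Walk x u →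
      (T.deleteEdges {s(a, b)}).Reachable x u ∨
      ((T.deleteEdges {s(a, b)}).Reachable x a ∧ (T.deleteEdges {s(a, b)}).Reachable b u) ∨
      ((T.deleteEdges {s(a, b)}).Reachable x b ∧ (T.deleteEdges {s(a, b)}).Reachable a u) := by
  intro x u p
  induction p with
  | nil => exact Or.inl (Reachable.refl _)
  | @cons x y u h q ih =>
    by_cases he : s(x, y) = s(a, b)
    · rw [Sym2.eq_iff] at he
      rcases he with ⟨hx, hy⟩ | ⟨hx, hy⟩
      · subst hx; subst hy
        rcases ih with h1 | ⟨h1, h2⟩ | ⟨h1, h2⟩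
        · exact Or.inr (Or.inl ⟨Reachable.refl _, h1⟩)
        · exact absurd h1.symm (tree_not_reach hT hab)
        · exact Or.inl h2
      · subst hx; subst hy
        rcases ih with h1 | ⟨h1, h2⟩ | ⟨h1, h2⟩
        · exact Or.inr (Or.inr ⟨Reachable.refl _, h1⟩)
        · exact Or.inl h2
        · exact absurd h1 (tree_not_reach hT hab)
    · have hD : (T.deleteEdges {s(a, b)}).Adj x y := by
        rw [SimpleGraph.deleteEdges_adj]
        exact ⟨h, by simpa using he⟩
      rcases ih with h1 | ⟨h1, h2⟩ | ⟨h1, h2⟩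
      · exact Or.inl (hD.reachable.trans h1)
      · exact Or.inr (Or.inl ⟨hD.reachable.trans h1, h2⟩)
      · exact Or.inr (Or.inr ⟨hD.reachable.trans h1, h2⟩)

lemma reach_or (hT : T.IsTree) {a b : τ} (hab : T.Adj a b) (u : τ) :
    (T.deleteEdges {s(a, b)}).Reachable a u ∨ (T.deleteEdges {s(a, b)}).Reachable b u := by
  obtain ⟨p⟩ := hT.isConnected.preconnected a u
  rcases reach_or_of_walk hT hab p with h | ⟨h1, h2⟩ | ⟨h1, h2⟩
  · exact Or.inl h
  · exact Or.inr h2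
  · exact absurd h1 (tree_not_reach hT hab)

lemma not_reach_both (hT : T.IsTree) {a b u : τ} (hab : T.Adj a b)
    (h1 : (T.deleteEdges {s(a, b)}).Reachable a u)
    (h2 : (T.deleteEdges {s(a, b)}).Reachable b u) : False :=
  tree_not_reach hT hab (h1.trans h2.symm)

lemma reach_retarget {H : SimpleGraph τ} (hH : H ≤ T) {e' : Sym2 τ} {w x u : τ}
    (p : H.Walk x u) (hw : w ∈ e') (hns : w ∉ p.support) :
    (T.deleteEdges {e'}).Reachable x u := by
  refine ⟨p.transfer _ ?_⟩
  intro e he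
  rw [SimpleGraph.edgeSet_deleteEdges]
  refine ⟨SimpleGraph.edgeSet_mono hH (p.edges_subset_edgeSet he), ?_⟩
  intro hmem
  rw [Set.mem_singleton_iff] at hmem
  subst hmem
  induction e using Sym2.ind with
  | _ c d =>
    rw [Sym2.mem_iff] at hw
    rcases hw with rfl | rfl
    · exact hns (p.fst_mem_support_of_mem_edges he)
    · exact hns (p.snd_mem_support_of_mem_edges he)

lemma support_reach {t s u u' : τ} (q : T.Walk s u) (ht : t ∉ q.support)
    (hu' : u' ∈ q.support) : (T.deleteEdges {s(t, s)}).Reachable s u' := by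
  classical
  exact reach_retarget le_rfl (q.takeUntil u' hu') (Sym2.mem_mk_left t s)
    (fun h => ht (q.support_takeUntil_subset hu' h))

lemma first_step (hT : T.IsTree) {t u : τ} (hne : u ≠ t) :
    ∃ s, ∃ p : T.Walk s u, T.Adj t s ∧ t ∉ p.support := by
  classical
  obtain ⟨w⟩ := hT.isConnected.preconnected t u
  obtain ⟨p, hpath⟩ := w.toPath
  cases p with
  | nil => exact absurd rfl hne
  | cons h q =>
    exact ⟨_, q, h, ((SimpleGraph.Walk.cons_isPath_iff h q).mp hpath).2⟩

lemma branch_unique (hT : T.IsTree) {t s s' u : τ} (hs : T.Adj t s) (hs' : T.Adj t s')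
    (h1 : (T.deleteEdges {s(t, s)}).Reachable s u)
    (h2 : (T.deleteEdges {s(t, s')}).Reachable s' u) : s = s' := by
  classical
  by_contra hne
  obtain ⟨p⟩ := h1
  have ht : t ∉ p.support := by
    intro hmem
    have hre : (T.deleteEdges {s(t, s)}).Reachable s t := ⟨p.takeUntil t hmem⟩
    exact tree_not_reach hT hs hre.symm
  have h3 : (T.deleteEdges {s(t, s')}).Reachable s u :=
    reach_retarget (SimpleGraph.deleteEdges_le _) p (Sym2.mem_mk_left t s') ht
  have hadj : (T.deleteEdges {s(t, s')}).Adj t s := by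
    rw [SimpleGraph.deleteEdges_adj]
    refine ⟨hs, ?_⟩
    rw [Set.mem_singleton_iff, Sym2.eq_iff]
    push_neg
    exact ⟨fun _ => hne, fun h _ => hs'.ne h⟩
  exact not_reach_both hT hs' (hadj.reachable.trans h3) h2

lemma mem_side_iff {a b : τ} {v : V} :
    v ∈ side T X a b ↔ ∃ u, (T.deleteEdges {s(a, b)}).Reachable a u ∧ v ∈ X u := by
  simp [side]

lemma side_total (hT : T.IsTree) (hsurj : ∀ B : Set V, IsOmegaEdgeBlock G B → ∃ t, X t = B)
    {a b : τ} (hab : T.Adj a b) (v : V) :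
    v ∈ side T X a b ∨ v ∈ side T X b a := by
  obtain ⟨t, ht⟩ := exists_block hsurj v
  have hgr : T.deleteEdges {s(b, a)} = T.deleteEdges {s(a, b)} := by rw [Sym2.eq_swap]
  rcases reach_or hT hab t with h | h
  · exact Or.inl (mem_side_iff.mpr ⟨t, h, ht⟩)
  · exact Or.inr (mem_side_iff.mpr ⟨t, by rw [hgr]; exact h, ht⟩)

lemma side_disjoint (hT : T.IsTree) (hblocks : ∀ t, IsOmegaEdgeBlock G (X t))
    (hinj : Function.Injective X) {a b : τ} (hab : T.Adj a b) {v : V}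
    (h1 : v ∈ side T X a b) (h2 : v ∈ side T X b a) : False := by
  obtain ⟨u1, hr1, hv1⟩ := mem_side_iff.mp h1
  obtain ⟨u2, hr2, hv2⟩ := mem_side_iff.mp h2
  have hgr : T.deleteEdges {s(b, a)} = T.deleteEdges {s(a, b)} := by rw [Sym2.eq_swap]
  rw [hgr] at hr2
  cases block_unique hblocks hinj hv1 hv2
  exact not_reach_both hT hab hr1 hr2

lemma ray_edge_injective {R : ℕ → V} (hR : IsRay G R) :
    Function.Injective (fun n => s(R n, R (n + 1))) := by
  intro i j h
  simp only [Sym2.eq_iff] at h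
  rcases h with ⟨h1, _⟩ | ⟨h1, h2⟩
  · exact hR.1 h1
  · have e1 := hR.1 h1
    have e2 := hR.1 h2
    omega

lemma sym2_mem_finite (e : Sym2 V) : {w | w ∈ e}.Finite := by
  induction e using Sym2.ind with
  | _ a b =>
    have : {w | w ∈ s(a, b)} = {a, b} := by ext w; simp [Sym2.mem_iff]
    rw [this]
    exact (Set.finite_singleton b).insert a

lemma walk_reach (hblocks : ∀ t, IsOmegaEdgeBlock G (X t))
    (hedge : ∀ t₁ t₂, T.Adj t₁ t₂ → ∃ x ∈ X t₁, ∃ y ∈ X t₂, G.Adj x y)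
    {F : Set (Sym2 V)} (hF : F.Finite) :
    ∀ {a b : τ} (p : T.Walk a b),
      (∀ u ∈ p.support.tail, ∀ w ∈ X u, ∀ e ∈ F, w ∉ e) →
      ∀ z ∈ X a, ∃ z' ∈ X b, (G.deleteEdges F).Reachable z z' := by
  intro a b p
  induction p with
  | nil => exact fun _ z hz => ⟨z, hz, Reachable.refl z⟩
  | @cons a c b h q ih =>
    intro hgood z hz
    rw [SimpleGraph.Walk.support_cons, List.tail_cons] at hgood
    obtain ⟨x, hx, y, hy, hxy⟩ := hedge a c h
    have hedgeF : s(x, y) ∉ F := fun hmem =>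
      hgood c q.start_mem_support y hy _ hmem (Sym2.mem_mk_right x y)
    have h1 : (G.deleteEdges F).Reachable z x := same_block_omega hblocks hz hx F hF
    have h2 : (G.deleteEdges F).Adj x y := by
      rw [SimpleGraph.deleteEdges_adj]; exact ⟨hxy, hedgeF⟩
    obtain ⟨z', hz', h3⟩ := ih (fun u hu => hgood u (List.mem_of_mem_tail hu)) y hy
    exact ⟨z', hz', (h1.trans h2.reachable).trans h3⟩

lemma tail_side (hT : T.IsTree) (hsurj : ∀ B : Set V, IsOmegaEdgeBlock G B → ∃ t, X t = B)
    {R : ℕ → V} (hR : IsRay G R) {a b : τ} (hab : T.Adj a b)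
    (hfin : (edgesBetween G (side T X a b) (side T X b a)).Finite) :
    (∃ m, ∀ n ≥ m, R n ∈ side T X a b) ∨ (∃ m, ∀ n ≥ m, R n ∈ side T X b a) := by
  set A := side T X a b with hA
  set B := side T X b a with hB
  have hN : {n | s(R n, R (n + 1)) ∈ edgesBetween G A B}.Finite :=
    Set.Finite.preimage ((ray_edge_injective hR).injOn) hfin
  obtain ⟨M, hM⟩ := hN.bddAbove
  have hno : ∀ n ≥ M + 1, s(R n, R (n + 1)) ∉ edgesBetween G A B := by
    intro n hn he
    have := hM he
    omega
  have hstep : ∀ n ≥ M + 1, (R n ∈ A → R (n + 1) ∈ A) ∧ (R n ∈ B → R (n + 1) ∈ B) := by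
    intro n hn
    constructor
    · intro hRn
      rcases side_total (G := G) hT hsurj hab (R (n + 1)) with h | h
      · exact h
      · exact absurd ⟨(hR.2 n), R n, hRn, R (n + 1), h, rfl⟩ (hno n hn)
    · intro hRn
      rcases side_total (G := G) hT hsurj hab (R (n + 1)) with h | h
      · refine absurd ?_ (hno n hn)
        exact ⟨(hR.2 n), R (n + 1), h, R n, hRn, Sym2.eq_swap⟩
      · exact h
  have key : ∀ k, (R (M + 1) ∈ A → R (M + 1 + k) ∈ A) ∧ (R (M + 1) ∈ B → R (M + 1 + k) ∈ B) := by
    intro k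
    induction k with
    | zero => exact ⟨id, id⟩
    | succ k ih =>
      constructor
      · intro h
        exact (hstep (M + 1 + k) (by omega)).1 (ih.1 h)
      · intro h
        exact (hstep (M + 1 + k) (by omega)).2 (ih.2 h)
  rcases side_total (G := G) hT hsurj hab (R (M + 1)) with h | h
  · left
    refine ⟨M + 1, fun n hn => ?_⟩
    have := (key (n - (M + 1))).1 h
    rwa [show M + 1 + (n - (M + 1)) = n by omega] at this
  · right
    refine ⟨M + 1, fun n hn => ?_⟩
    have := (key (n - (M + 1))).2 h
    rwa [show M + 1 + (n - (M + 1)) = n by omega] at this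

end Aux
section Main

open SimpleGraph

variable {V τ : Type*} {G : SimpleGraph V} {T : SimpleGraph τ} {X : τ → Set V}

lemma exists_out (hT : T.IsTree)
    (hblocks : ∀ t, IsOmegaEdgeBlock G (X t))
    (hinj : Function.Injective X)
    (hsurj : ∀ B : Set V, IsOmegaEdgeBlock G B → ∃ t, X t = B)
    (hadhesion : ∀ t₁ t₂, T.Adj t₁ t₂ →
      (edgesBetween G (side T X t₁ t₂) (side T X t₂ t₁)).Finite)
    (hedge : ∀ t₁ t₂, T.Adj t₁ t₂ → ∃ x ∈ X t₁, ∃ y ∈ X t₂, G.Adj x y)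
    {R : ℕ → V} (hR : IsRay G R)
    (hundom : ∀ v : V, ¬ EdgeDominates G v R) (t : τ) :
    ∃ s, T.Adj t s ∧ ∃ m, ∀ n ≥ m, R n ∈ side T X s t := by
  classical
  by_contra hcon
  have hcon' : ∀ s, T.Adj t s → ∃ m, ∀ n ≥ m, R n ∈ side T X t s := by
    intro s hs
    rcases tail_side hT hsurj hR hs (hadhesion t s hs) with h | h
    · exact h
    · exact absurd ⟨s, hs, h⟩ hcon
  obtain ⟨v, hv⟩ : ∃ v, v ∈ X t := by
    obtain ⟨x, hx⟩ := hblocks t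
    exact ⟨x, by rw [hx]; exact omegaEquiv_refl x⟩
  refine hundom v ?_
  intro F hF
  choose bl hbl using exists_block (G := G) hsurj
  have hstep : ∀ u : τ, ∃ s, u ≠ t →
      T.Adj t s ∧ (T.deleteEdges {s(t, s)}).Reachable s u := by
    intro u
    by_cases h : u = t
    · exact ⟨t, fun h' => absurd h h'⟩
    · obtain ⟨s, p, hadj, hts⟩ := first_step hT h
      exact ⟨s, fun _ => ⟨hadj, support_reach p hts p.end_mem_support⟩⟩
  choose stp hstp using hstep
  set S : Set τ := bl '' {w | ∃ e ∈ F, w ∈ e} with hS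
  have hWfin : {w | ∃ e ∈ F, w ∈ e}.Finite := by
    have heq : {w : V | ∃ e ∈ F, w ∈ e} = ⋃ e ∈ F, {w | w ∈ e} := by ext w; simp
    rw [heq]
    exact hF.biUnion (fun e _ => sym2_mem_finite e)
  have hSfin : S.Finite := hWfin.image bl
  set Bad : Set ℕ := ⋃ u ∈ S \ {t}, {n | R n ∉ side T X t (stp u)} with hBadDef
  have hBadfin : Bad.Finite := by
    refine Set.Finite.biUnion (Set.Finite.diff hSfin : (S \ {t}).Finite) ?_
    intro u hu
    obtain ⟨m, hm⟩ := hcon' (stp u) (hstp u hu.2).1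
    refine Set.Finite.subset (Set.finite_Iio m) ?_
    intro n hn
    rw [Set.mem_Iio]
    by_contra hge
    exact hn (hm n (by omega))
  obtain ⟨M, hM⟩ := hBadfin.bddAbove
  refine ⟨M + 1, ?_⟩
  intro n hn
  by_cases hcase : bl (R n) = t
  · exact same_block_omega hblocks hv (hcase ▸ hbl (R n)) F hF
  · obtain ⟨s₀, p, hadj₀, htp⟩ := first_step hT hcase
    have hgoodsupp : ∀ u' ∈ p.support, ∀ w ∈ X u', ∀ e ∈ F, w ∉ e := by
      intro u' hu' w hw e heF hwe
      have hreach : (T.deleteEdges {s(t, s₀)}).Reachable s₀ u' := support_reach p htp hu'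
      have hu'S : u' ∈ S := ⟨w, ⟨e, heF, hwe⟩, block_unique hblocks hinj (hbl w) hw⟩
      have hu't : u' ≠ t := by
        rintro rfl
        exact tree_not_reach hT hadj₀ hreach.symm
      have h1 := hstp u' hu't
      have hsame : stp u' = s₀ := branch_unique hT h1.1 hadj₀ h1.2 hreach
      have hnB : n ∉ Bad := fun hmem => by have := hM hmem; omega
      have hside : R n ∈ side T X t (stp u') := by
        by_contra hns
        exact hnB (Set.mem_biUnion (⟨hu'S, hu't⟩ : u' ∈ S \ {t}) hns)
      rw [hsame] at hside
      obtain ⟨u0, hr0, hv0⟩ := mem_side_iff.mp hside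
      have hu0 : u0 = bl (R n) := block_unique hblocks hinj hv0 (hbl (R n))
      have hrb : (T.deleteEdges {s(t, s₀)}).Reachable s₀ (bl (R n)) :=
        support_reach p htp p.end_mem_support
      exact not_reach_both hT hadj₀ (hu0 ▸ hr0) hrb
    have hgood : ∀ u' ∈ (SimpleGraph.Walk.cons hadj₀ p).support.tail,
        ∀ w ∈ X u', ∀ e ∈ F, w ∉ e := by
      rw [SimpleGraph.Walk.support_cons, List.tail_cons]
      exact hgoodsupp
    obtain ⟨z', hz', hre⟩ := walk_reach hblocks hedge hF (SimpleGraph.Walk.cons hadj₀ p) hgood v hv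
    exact hre.trans (same_block_omega hblocks hz' (hbl (R n)) F hF)

end Main

/-- Given a tree-cut decomposition of finite adhesion into the ω-edge blocks of a connected
graph (with adjacent parts joined by edges), every ray of `G` that is edge-dominated by no
vertex follows a ray of the decomposition tree. -/
theorem undominated_ray_follows_tree_ray {V τ : Type*} (G : SimpleGraph V)
    (hG : G.Connected)
    (T : SimpleGraph τ) (hT : T.IsTree) (X : τ → Set V)
    (hblocks : ∀ t, IsOmegaEdgeBlock G (X t))
    (hinj : Function.Injective X)
    (hsurj : ∀ B : Set V, IsOmegaEdgeBlock G B → ∃ t, X t = B)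
    (hadhesion : ∀ t₁ t₂, T.Adj t₁ t₂ →
      (edgesBetween G (side T X t₁ t₂) (side T X t₂ t₁)).Finite)
    (hedge : ∀ t₁ t₂, T.Adj t₁ t₂ → ∃ x ∈ X t₁, ∃ y ∈ X t₂, G.Adj x y)
    (R : ℕ → V) (hR : IsRay G R)
    (hundom : ∀ v : V, ¬ EdgeDominates G v R) :
    ∃ r : ℕ → τ, IsRay T r ∧
      ∀ n, ∃ m, ∀ k ≥ m, R k ∈ side T X (r (n + 1)) (r n) := by
  classical
  have lemA := exists_out hT hblocks hinj hsurj hadhesion hedge hR hundom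
  choose nxt hnxt using lemA
  obtain ⟨t₀, _⟩ := exists_block (G := G) hsurj (R 0)
  set r : ℕ → τ := fun n => nxt^[n] t₀ with hrdef
  have hrs : ∀ n, r (n + 1) = nxt (r n) := fun n => Function.iterate_succ_apply' nxt n t₀
  have hadjr : ∀ n, T.Adj (r n) (r (n + 1)) := fun n => by rw [hrs]; exact (hnxt (r n)).1
  have htail : ∀ n, ∃ m, ∀ k ≥ m, R k ∈ side T X (r (n + 1)) (r n) := fun n => by
    rw [hrs]; exact (hnxt (r n)).2
  have hnb : ∀ n, r (n + 2) ≠ r n := by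
    intro n he
    obtain ⟨m1, h1⟩ := htail n
    obtain ⟨m2, h2⟩ := htail (n + 1)
    have e1 := h1 (max m1 m2) (le_max_left _ _)
    have e2 := h2 (max m1 m2) (le_max_right _ _)
    rw [he] at e2
    exact side_disjoint hT hblocks hinj (hadjr n) e2 e1
  set Sn : ℕ → Set τ :=
    fun n => {u | (T.deleteEdges {s(r n, r (n + 1))}).Reachable (r (n + 1)) u} with hSnDef
  have hmem : ∀ n, r (n + 1) ∈ Sn n := fun n => SimpleGraph.Reachable.refl _
  have hnot : ∀ n, r n ∉ Sn n := fun n h => tree_not_reach hT (hadjr n) h.symm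
  have hsub : ∀ n, Sn (n + 1) ⊆ Sn n := by
    intro n u hu
    obtain ⟨p⟩ := hu
    have hns : r (n + 1) ∉ p.support := by
      intro hmem'
      have hre : (T.deleteEdges {s(r (n + 1), r (n + 2))}).Reachable (r (n + 2)) (r (n + 1)) :=
        ⟨p.takeUntil _ hmem'⟩
      exact tree_not_reach hT (hadjr (n + 1)) hre.symm
    have h3 : (T.deleteEdges {s(r n, r (n + 1))}).Reachable (r (n + 2)) u :=
      reach_retarget (SimpleGraph.deleteEdges_le _) p (Sym2.mem_mk_right (r n) (r (n + 1))) hns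
    have hadj2 : (T.deleteEdges {s(r n, r (n + 1))}).Adj (r (n + 1)) (r (n + 2)) := by
      rw [SimpleGraph.deleteEdges_adj]
      refine ⟨hadjr (n + 1), ?_⟩
      rw [Set.mem_singleton_iff, Sym2.eq_iff]
      push_neg
      exact ⟨fun h _ => (hadjr n).ne h.symm, fun _ => hnb n⟩
    exact hadj2.reachable.trans h3
  have hchain : ∀ i k, Sn (i + k) ⊆ Sn i := by
    intro i k
    induction k with
    | zero => exact subset_rfl
    | succ k ih => exact (hsub (i + k)).trans ih
  have hlt : ∀ i j, i < j → r i ≠ r j := by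
    intro i j hij heq
    have hj : i + (j - i - 1) + 1 = j := by omega
    have h1 : r (i + (j - i - 1) + 1) ∈ Sn (i + (j - i - 1)) := hmem _
    rw [hj] at h1
    have h2 : r j ∈ Sn i := hchain i (j - i - 1) h1
    rw [← heq] at h2
    exact hnot i h2
  refine ⟨r, ⟨?_, hadjr⟩, htail⟩
  intro i j h
  rcases lt_trichotomy i j with hij | hij | hij
  · exact absurd h (hlt i j hij)
  · exact hij
  · exact absurd h.symm (hlt j i hij)
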